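/- arXiv:2006.01041 — 2 statements merged into one kernel-verified Lean document; each statement's English description precedes it below -/
import Mathlib

section
/- Let b be even and A = {0, a, a + b/2, b} with 0 < a < a + b/2 < b and gcd(a, b/2) = 1. Then for every N ≥ b/2, NA = {0,1,...,bN} \ (E(A) ∪ (bN − E(b−A))). -/
open Pointwise

/-- The `N`-fold sumset of a finite set `A` (sums of `N` not-necessarily-distinct elements),
with the `0`-fold sumset being `{0}`. -/
def nfold {α : Type*} [AddMonoid α] [DecidableEq α] (A : Finset α) : ℕ → Finset α
  | 0 => {0}
  | n + 1 => nfold A n + A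

/-- `postP A` is the set of integers expressible as a finite (nonempty) sum of elements of `A`. -/
def postP (A : Finset ℤ) : Set ℤ := {n | ∃ N : ℕ, 1 ≤ N ∧ n ∈ nfold A N}

/-- The exceptional set `E(A)`. -/
def postE (A : Finset ℤ) : Set ℤ := {n | 1 ≤ n ∧ n ∉ postP A}

/-- `n_{a,A}`: the least `n ≥ 1` with `n ∈ P(A)` and `n ≡ a (mod b)`. -/
noncomputable def nmin (A : Finset ℤ) (b a : ℤ) : ℤ :=
  sInf {n : ℤ | 1 ≤ n ∧ n ∈ postP A ∧ n % b = a % b}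

/-- `N_{a,A}`: the least `N ≥ 1` with `n_{a,A} ∈ NA`. -/
noncomputable def Nmin (A : Finset ℤ) (b a : ℤ) : ℕ :=
  sInf {N : ℕ | 1 ≤ N ∧ nmin A b a ∈ nfold A N}

/-- `N_A^* = max_{1 ≤ a ≤ b-1} N_{a,A}`. -/
noncomputable def Nstar (A : Finset ℤ) (b : ℤ) : ℕ :=
  (Finset.Icc 1 (b - 1)).sup (fun a => Nmin A b a)

lemma mem_nfold_iff (a m b : ℤ) (A : Finset ℤ) (hA : A = {0, a, a + m, b}) (N : ℕ) (x : ℤ) :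
    x ∈ nfold A N ↔ ∃ j k l : ℕ, j + k + l ≤ N ∧ x = j * a + k * (a + m) + l * b := by
  induction N generalizing x with
  | zero =>
    simp only [nfold, Finset.mem_singleton]
    constructor
    · rintro rfl; exact ⟨0, 0, 0, by omega, by push_cast; ring⟩
    · rintro ⟨j, k, l, hle, hx⟩
      have hj : j = 0 := by omega
      have hk : k = 0 := by omega
      have hl : l = 0 := by omega
      subst hj hk hl; simpa using hx
  | succ n ih =>
    rw [show nfold A (n+1) = nfold A n + A from rfl]
    constructor
    · intro hx
      obtain ⟨y, hy, c, hc, rfl⟩ := Finset.mem_add.1 hx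
      obtain ⟨j, k, l, hle, rfl⟩ := (ih _).1 hy
      rw [hA] at hc
      simp only [Finset.mem_insert, Finset.mem_singleton] at hc
      rcases hc with rfl | rfl | rfl | rfl
      · exact ⟨j, k, l, by omega, by ring⟩
      · exact ⟨j + 1, k, l, by omega, by push_cast; ring⟩
      · exact ⟨j, k + 1, l, by omega, by push_cast; ring⟩
      · exact ⟨j, k, l + 1, by omega, by push_cast; ring⟩
    · rintro ⟨j, k, l, hle, rfl⟩
      rcases Nat.lt_or_ge (j + k + l) (n + 1) with h | h
      · have hy : (j:ℤ) * a + k * (a + m) + l * b ∈ nfold A n := (ih _).2 ⟨j, k, l, by omega, rfl⟩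
        have h0 : (0:ℤ) ∈ A := by rw [hA]; simp
        have := Finset.add_mem_add hy h0
        simpa using this
      · have hjkl : j + k + l = n + 1 := le_antisymm hle h
        rcases Nat.eq_zero_or_pos j with hj | hj
        · rcases Nat.eq_zero_or_pos k with hk | hk
          · have hl : l = n + 1 := by omega
            have hy := (ih ((j:ℤ) * a + (k:ℤ) * (a + m) + ((l-1 : ℕ):ℤ) * b)).2
              ⟨j, k, l - 1, by omega, rfl⟩
            have hb : b ∈ A := by rw [hA]; simp
            have := Finset.add_mem_add hy hb
            have heq : (j:ℤ) * a + k * (a + m) + (↑(l-1)) * b + b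
                = j * a + k * (a + m) + l * b := by
              have : ((l - 1 : ℕ) : ℤ) = (l : ℤ) - 1 := by
                have : 1 ≤ l := by omega
                push_cast [this]; ring
              rw [this]; ring
            rwa [heq] at this
          · have hy := (ih ((j:ℤ) * a + ((k-1 : ℕ):ℤ) * (a + m) + (l:ℤ) * b)).2
              ⟨j, k - 1, l, by omega, rfl⟩
            have hc : a + m ∈ A := by rw [hA]; simp
            have := Finset.add_mem_add hy hc
            have heq : (j:ℤ) * a + (↑(k-1)) * (a + m) + l * b + (a + m)
                = j * a + k * (a + m) + l * b := by
              have : ((k - 1 : ℕ) : ℤ) = (k : ℤ) - 1 := by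
                have : 1 ≤ k := by omega
                push_cast [this]; ring
              rw [this]; ring
            rwa [heq] at this
        · have hy := (ih (((j-1 : ℕ):ℤ) * a + (k:ℤ) * (a + m) + (l:ℤ) * b)).2
            ⟨j - 1, k, l, by omega, rfl⟩
          have hc : a ∈ A := by rw [hA]; simp
          have := Finset.add_mem_add hy hc
          have heq : ((j-1 : ℕ):ℤ) * a + (k:ℤ) * (a + m) + (l:ℤ) * b + a
              = j * a + k * (a + m) + l * b := by
            have : ((j - 1 : ℕ) : ℤ) = (j : ℤ) - 1 := by push_cast [hj]; ring
            rw [this]; ring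
          rwa [heq] at this

lemma nfold_reflect (b : ℤ) (A : Finset ℤ) (N : ℕ) (x : ℤ) (hx : x ∈ nfold A N) :
    b * N - x ∈ nfold (A.image (fun y => b - y)) N := by
  induction N generalizing x with
  | zero =>
    simp only [nfold, Finset.mem_singleton] at hx ⊢
    simp [hx]
  | succ n ih =>
    rw [show nfold A (n+1) = nfold A n + A from rfl] at hx
    obtain ⟨y, hy, c, hc, rfl⟩ := Finset.mem_add.1 hx
    rw [show nfold (A.image (fun y => b - y)) (n+1)
        = nfold (A.image (fun y => b - y)) n + A.image (fun y => b - y) from rfl]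
    have heq : b * ((n:ℕ)+1 : ℕ) - (y + c) = (b * n - y) + (b - c) := by push_cast; ring
    rw [heq]
    exact Finset.add_mem_add (ih _ hy) (Finset.mem_image_of_mem _ hc)

lemma nat_key (α M N S T k l : ℕ) (hα : 1 ≤ α) (hαM : α < M) (hMN : M ≤ N)
    (hk : k ≤ S) (hT : T = k + 2 * l)
    (hle : S * α + T * M ≤ M * N) :
    ∃ S' k' l', k' ≤ S' ∧ S' + l' ≤ N ∧ S' * α + (k' + 2 * l') * M = S * α + T * M := by
  have hM0 : 0 < M := by omega
  obtain ⟨q, s0, hs0M, hSd⟩ : ∃ q s0, s0 < M ∧ S = M * q + s0 :=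
    ⟨S / M, S % M, Nat.mod_lt _ hM0, (Nat.div_add_mod S M).symm⟩
  obtain ⟨t0, ht0⟩ : ∃ t0, t0 = T + q * α := ⟨_, rfl⟩
  have hX : S * α + T * M = s0 * α + t0 * M := by rw [hSd, ht0]; ring
  have hle' : s0 * α + t0 * M ≤ N * M := by rw [← hX, Nat.mul_comm N M]; exact hle
  rcases Nat.eq_zero_or_pos s0 with h1 | h1
  · subst h1
    rw [Nat.zero_mul, Nat.zero_add] at hle'
    have ht0N : t0 ≤ N := Nat.le_of_mul_le_mul_right hle' hM0
    rcases Nat.even_or_odd t0 with he | ho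
    · have he2 := Nat.even_iff.mp he
      refine ⟨0, 0, t0 / 2, by omega, by omega, ?_⟩
      have h2 : 0 + 2 * (t0 / 2) = t0 := by omega
      rw [hX, h2]
    · have ho2 := Nat.odd_iff.mp ho
      have hq1 : 1 ≤ q := by
        by_contra h
        have hq0 : q = 0 := by omega
        subst hq0
        rw [Nat.zero_mul, Nat.add_zero] at ht0
        rw [Nat.mul_zero, Nat.add_zero] at hSd
        omega
      have hαt0 : α ≤ t0 := by
        have h5 : α ≤ q * α := Nat.le_mul_of_pos_left _ hq1
        omega
      rcases Nat.lt_or_ge M (t0 - α) with h3 | h3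
      · rcases Nat.even_or_odd (t0 - α - M) with he | hodd
        · have he2 := Nat.even_iff.mp he
          refine ⟨M, M, (t0 - α - M) / 2, le_rfl, by omega, ?_⟩
          have h2 : M + 2 * ((t0 - α - M) / 2) = t0 - α := by omega
          rw [hX, h2]
          zify [hαt0]
          ring
        · have ho3 := Nat.odd_iff.mp hodd
          refine ⟨M, M - 1, (t0 - α - (M - 1)) / 2, by omega, by omega, ?_⟩
          have h2 : (M - 1) + 2 * ((t0 - α - (M - 1)) / 2) = t0 - α := by omega
          rw [hX, h2]
          zify [hαt0]
          ring
      · refine ⟨M, t0 - α, 0, h3, by omega, ?_⟩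
        have h2 : (t0 - α + 2 * 0) = t0 - α := by omega
        rw [hX, h2]
        zify [hαt0]
        ring
  · rcases Nat.lt_or_ge t0 s0 with ht | ht
    · refine ⟨s0, t0, 0, by omega, by omega, ?_⟩
      rw [hX]; norm_num
    · have hsα : 0 < s0 * α := Nat.mul_pos h1 hα
      have h5 : t0 * M < N * M := by omega
      have ht0N : t0 < N := Nat.lt_of_mul_lt_mul_right h5
      rcases Nat.even_or_odd (t0 - s0) with he | hodd
      · have he2 := Nat.even_iff.mp he
        refine ⟨s0, s0, (t0 - s0) / 2, le_rfl, by omega, ?_⟩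
        have h2 : s0 + 2 * ((t0 - s0) / 2) = t0 := by omega
        rw [hX, h2]
      · have ho3 := Nat.odd_iff.mp hodd
        refine ⟨s0, s0 - 1, (t0 - (s0 - 1)) / 2, by omega, by omega, ?_⟩
        have h2 : (s0 - 1) + 2 * ((t0 - (s0 - 1)) / 2) = t0 := by omega
        rw [hX, h2]

lemma key (a m b : ℤ) (hbm : b = 2 * m) (h1 : 0 < a) (ham : a < m)
    (A : Finset ℤ) (hA : A = {0, a, a + m, b}) (N : ℕ) (hN : m ≤ (N:ℤ)) (x : ℤ)
    (hx1 : x ∈ postP A) (hx3 : x ≤ m * N) : x ∈ nfold A N := by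
  obtain ⟨N', hN'1, hmem⟩ := hx1
  obtain ⟨j, k, l, _, hxeq⟩ := (mem_nfold_iff a m b A hA N' x).1 hmem
  set α := a.toNat with hαdef
  set M := m.toNat with hMdef
  have haα : (α:ℤ) = a := Int.toNat_of_nonneg h1.le
  have hmM : (M:ℤ) = m := Int.toNat_of_nonneg (by omega)
  have hα1 : 1 ≤ α := by
    have : (1:ℤ) ≤ (α:ℤ) := by rw [haα]; omega
    exact_mod_cast this
  have hαM : α < M := by
    have : (α:ℤ) < (M:ℤ) := by rw [haα, hmM]; omega
    exact_mod_cast this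
  have hMN : M ≤ N := by
    have : (M:ℤ) ≤ (N:ℤ) := by rw [hmM]; omega
    exact_mod_cast this
  have hxX : x = (((j + k) * α + (k + 2*l) * M : ℕ) : ℤ) := by
    rw [hxeq, hbm]
    push_cast [haα, hmM]
    ring
  have hle : (j+k) * α + (k + 2*l) * M ≤ M * N := by
    have hz : (((j+k) * α + (k + 2*l) * M : ℕ) : ℤ) ≤ ((M * N : ℕ) : ℤ) := by
      rw [← hxX]
      push_cast [hmM]
      linarith [hx3]
    exact_mod_cast hz
  obtain ⟨S', k', l', hk', hcost, heq⟩ :=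
    nat_key α M N (j+k) (k+2*l) k l hα1 hαM hMN (by omega) rfl hle
  refine (mem_nfold_iff a m b A hA N x).2 ⟨S' - k', k', l', by omega, ?_⟩
  have heqz : (S':ℤ) * a + ((k':ℤ) + 2*(l':ℤ)) * m = x := by
    have h6 := congrArg (fun n : ℕ => (n : ℤ)) heq
    push_cast at h6
    rw [haα, hmM] at h6
    rw [hxX]
    push_cast [haα, hmM]
    linarith [h6]
  rw [Nat.cast_sub hk', hbm]
  linarith [heqz]

theorem stmt18 (a b m : ℤ) (hbm : b = 2 * m)
    (h1 : 0 < a) (h2 : a < a + m) (h3 : a + m < b)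
    (hgcd : Int.gcd a m = 1)
    (A : Finset ℤ) (hA : A = {0, a, a + m, b})
    (N : ℕ) (hN : m ≤ (N : ℤ)) :
    (↑(nfold A N) : Set ℤ) =
      Set.Icc 0 (b * N) \
        (postE A ∪ (fun x => b * N - x) '' postE (A.image (fun x => b - x))) := by
  have hm2 : 2 ≤ m := by omega
  have hN1 : 1 ≤ N := by omega
  set B := A.image (fun x => b - x) with hBdef
  have hB : B = {0, m - a, (m - a) + m, b} := by
    rw [hBdef, hA]
    ext y
    simp only [Finset.mem_image, Finset.mem_insert, Finset.mem_singleton]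
    constructor
    · rintro ⟨x, (rfl | rfl | rfl | rfl), rfl⟩ <;> omega
    · rintro (rfl | rfl | rfl | rfl)
      · exact ⟨b, by simp, by ring⟩
      · exact ⟨a + m, by simp, by omega⟩
      · exact ⟨a, by simp, by omega⟩
      · exact ⟨0, by simp, by ring⟩
  have hBA : B.image (fun y => b - y) = A := by
    rw [hBdef, Finset.image_image]
    have : ((fun y => b - y) ∘ fun x => b - x) = id := by
      funext z; simp
    rw [this, Finset.image_id]
  ext x
  simp only [Finset.coe_sort_coe, Finset.mem_coe, Set.mem_diff, Set.mem_Icc, Set.mem_union,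
    Set.mem_image]
  constructor
  · intro hx
    obtain ⟨j, k, l, hle, hxeq⟩ := (mem_nfold_iff a m b A hA N x).1 hx
    have hj0 : (0:ℤ) ≤ (j:ℤ) := Nat.cast_nonneg j
    have hk0 : (0:ℤ) ≤ (k:ℤ) := Nat.cast_nonneg k
    have hl0 : (0:ℤ) ≤ (l:ℤ) := Nat.cast_nonneg l
    have t1 : (0:ℤ) ≤ (j:ℤ) * (b - a) := mul_nonneg hj0 (by omega)
    have t2 : (0:ℤ) ≤ (k:ℤ) * (b - (a + m)) := mul_nonneg hk0 (by omega)
    have t4 : (0:ℤ) ≤ (j:ℤ) * a := mul_nonneg hj0 (by omega)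
    have t5 : (0:ℤ) ≤ (k:ℤ) * (a + m) := mul_nonneg hk0 (by omega)
    have t6 : (0:ℤ) ≤ (l:ℤ) * b := mul_nonneg hl0 (by omega)
    have hsum : ((j:ℤ) + k + l) * b ≤ (N:ℤ) * b := by
      apply mul_le_mul_of_nonneg_right _ (by omega : (0:ℤ) ≤ b)
      exact_mod_cast hle
    refine ⟨⟨by linarith [hxeq], by nlinarith [hxeq]⟩, ?_⟩
    rintro (hE | ⟨e, heE, heq⟩)
    · exact hE.2 ⟨N, hN1, hx⟩
    · refine heE.2 ⟨N, hN1, ?_⟩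
      have h7 : e = b * N - x := by omega
      rw [h7]
      exact nfold_reflect b A N x hx
  · rintro ⟨⟨hx0, hxb⟩, hnot⟩
    have hP1 : 1 ≤ x → x ∈ postP A := by
      intro hx1
      by_contra hc
      exact hnot (Or.inl ⟨hx1, hc⟩)
    have hP2 : 1 ≤ b * N - x → b * N - x ∈ postP B := by
      intro hy1
      by_contra hc
      exact hnot (Or.inr ⟨b * N - x, ⟨hy1, hc⟩, by ring⟩)
    have hbN2 : b * (N:ℤ) = 2 * (m * (N:ℤ)) := by rw [hbm]; ring
    rcases le_or_gt x (m * N) with hc | hc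
    · rcases eq_or_lt_of_le hx0 with hx00 | hx01
      · refine (mem_nfold_iff a m b A hA N x).2 ⟨0, 0, 0, by omega, ?_⟩
        push_cast
        omega
      · exact key a m b hbm h1 (by omega) A hA N hN x (hP1 (by omega)) hc
    · rcases eq_or_lt_of_le hxb with hxbb | hxbl
      · refine (mem_nfold_iff a m b A hA N x).2 ⟨0, 0, N, by omega, ?_⟩
        push_cast
        linarith [hxbb]
      · have hy1 : 1 ≤ b * N - x := by omega
        have hyP : b * N - x ∈ postP B := hP2 hy1
        have hyle : b * N - x ≤ m * N := by omega
        have hymem : b * N - x ∈ nfold B N :=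
          key (m - a) m b hbm (by omega) (by omega) B hB N hN (b * N - x) hyP hyle
        have := nfold_reflect b B N (b * N - x) hymem
        rw [hBA] at this
        have h8 : b * ↑N - (b * ↑N - x) = x := by ring
        rwa [h8] at this
end

section
/- Let b be even and A = {0, a, b/2, a + b/2, b} with 0 < a < b/2 < a + b/2 < b and gcd(a, b/2) = 1. Then for every N ≥ b/2 − 1, NA = {0,1,...,bN} \ (E(A) ∪ (bN − E(b−A))). -/
open Pointwise

lemma nfold_succ_subset (A : Finset ℤ) (h0 : (0:ℤ) ∈ A) (p : ℕ) :
    nfold A p ⊆ nfold A (p+1) := by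
  intro u hu
  have : u + 0 ∈ nfold A p + A := Finset.add_mem_add hu h0
  simpa [nfold] using this

lemma nfold_subset (A : Finset ℤ) (h0 : (0:ℤ) ∈ A) {p q : ℕ} (h : p ≤ q) :
    nfold A p ⊆ nfold A q := by
  induction q with
  | zero => simpa [Nat.le_zero.mp h]
  | succ q ih =>
    rcases Nat.lt_or_ge p (q+1) with h' | h'
    · exact fun u hu => nfold_succ_subset A h0 q (ih (Nat.lt_succ_iff.mp h') hu)
    · have : p = q + 1 := le_antisymm h h'
      subst this; exact fun u hu => hu

lemma mem_nfold_add {A : Finset ℤ} {u v : ℤ} {p q : ℕ}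
    (hu : u ∈ nfold A p) (hv : v ∈ nfold A q) : u + v ∈ nfold A (p+q) := by
  induction q generalizing v with
  | zero =>
    simp [nfold] at hv; subst hv; simpa using hu
  | succ q ih =>
    rw [nfold, Finset.mem_add] at hv
    obtain ⟨w, hw, e, he, rfl⟩ := hv
    have : (u + w) + e ∈ nfold A (p+q) + A := Finset.add_mem_add (ih hw) he
    have h2 : u + (w + e) = (u + w) + e := by ring
    rw [h2, show p + (q+1) = (p+q) + 1 from rfl, nfold]
    exact this

lemma smul_mem_nfold {A : Finset ℤ} {e : ℤ} (he : e ∈ A) (k : ℕ) :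
    (k:ℤ) * e ∈ nfold A k := by
  induction k with
  | zero => simp [nfold]
  | succ k ih =>
    have he1 : e ∈ nfold A 1 := by
      have : (0:ℤ) + e ∈ nfold A 0 + A := Finset.add_mem_add (by simp [nfold]) he
      simpa [nfold] using this
    have := mem_nfold_add ih he1
    push_cast
    have h2 : ((k:ℤ)+1)*e = (k:ℤ)*e + e := by ring
    rw [h2]; exact this

lemma nfold_bound {A : Finset ℤ} {c : ℤ} (hA : ∀ e ∈ A, 0 ≤ e ∧ e ≤ c) :
    ∀ N, ∀ n ∈ nfold A N, 0 ≤ n ∧ n ≤ c * N := by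
  intro N
  induction N with
  | zero => intro n hn; simp [nfold] at hn; simp [hn]
  | succ N ih =>
    intro n hn
    rw [nfold, Finset.mem_add] at hn
    obtain ⟨u, hu, e, he, rfl⟩ := hn
    obtain ⟨h1, h2⟩ := ih u hu
    obtain ⟨h3, h4⟩ := hA e he
    constructor
    · linarith
    · push_cast; nlinarith [h2, h4]

lemma nfold_rep (a m : ℤ) (A : Finset ℤ) (hA : A = {0, a, m, a + m, 2*m}) :
    ∀ N, ∀ n ∈ nfold A N, ∃ x y : ℤ, 0 ≤ x ∧ 0 ≤ y ∧ n = x * a + y * m := by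
  intro N
  induction N with
  | zero => intro n hn; simp [nfold] at hn; exact ⟨0, 0, le_refl _, le_refl _, by simp [hn]⟩
  | succ N ih =>
    intro n hn
    rw [nfold, Finset.mem_add] at hn
    obtain ⟨u, hu, e, he, rfl⟩ := hn
    obtain ⟨x, y, hx, hy, rfl⟩ := ih u hu
    rw [hA] at he
    simp only [Finset.mem_insert, Finset.mem_singleton] at he
    rcases he with rfl | rfl | rfl | rfl | rfl
    · exact ⟨x, y, hx, hy, by ring⟩
    · exact ⟨x+1, y, by linarith, hy, by ring⟩
    · exact ⟨x, y+1, hx, by linarith, by ring⟩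
    · exact ⟨x+1, y+1, by linarith, by linarith, by ring⟩
    · exact ⟨x, y+2, hx, by linarith, by ring⟩

lemma nfold_dual (b : ℤ) (A : Finset ℤ) :
    ∀ N : ℕ, nfold (A.image (fun x => b - x)) N
      = (nfold A N).image (fun x => b * (N:ℤ) - x) := by
  intro N
  induction N with
  | zero => simp [nfold]
  | succ N ih =>
    ext n
    rw [nfold, Finset.mem_add, ih]
    simp only [Finset.mem_image, nfold, Finset.mem_add]
    constructor
    · rintro ⟨u, ⟨w, hw, rfl⟩, v, ⟨e, he, rfl⟩, rfl⟩
      exact ⟨w + e, ⟨w, hw, e, he, rfl⟩, by push_cast; ring⟩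
    · rintro ⟨u, ⟨w, hw, e, he, rfl⟩, rfl⟩
      exact ⟨b * N - w, ⟨w, hw, rfl⟩, b - e, ⟨e, he, rfl⟩, by push_cast; ring⟩

lemma main_half (a m : ℤ) (h1 : 0 < a) (h2 : a < m)
    (A : Finset ℤ) (hA : A = {0, a, m, a + m, 2*m})
    (N : ℕ) (hN : m - 1 ≤ (N : ℤ)) (n : ℤ) (hn : n ≤ m * N)
    (x y : ℤ) (hx : 0 ≤ x) (hy : 0 ≤ y) (hrep : n = x * a + y * m) :
    n ∈ nfold A N := by
  have hm : 0 < m := h1.trans h2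
  have h0A : (0:ℤ) ∈ A := by simp [hA]
  have haA : a ∈ A := by simp [hA]
  have hmA : m ∈ A := by simp [hA]
  have hamA : a + m ∈ A := by simp [hA]
  -- normalize x mod m
  set x' := x % m with hx'
  set k := x / m with hk
  have hxeq : m * k + x' = x := Int.mul_ediv_add_emod x m
  have hx'0 : 0 ≤ x' := Int.emod_nonneg x (ne_of_gt hm)
  have hx'm : x' < m := Int.emod_lt_of_pos x hm
  have hk0 : 0 ≤ k := Int.ediv_nonneg hx (le_of_lt hm)
  set y' := y + k * a with hy'
  have hy'0 : 0 ≤ y' := by positivity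
  have hrep' : n = x' * a + y' * m := by rw [hrep, ← hxeq]; ring
  have hy'N : y' ≤ (N:ℤ) := by nlinarith [hrep', hn, mul_nonneg hx'0 (le_of_lt h1)]
  have hx'N : x' ≤ (N:ℤ) := by linarith
  -- convert to naturals
  set p := x'.toNat with hp
  set q := y'.toNat with hq
  have hpc : (p:ℤ) = x' := Int.toNat_of_nonneg hx'0
  have hqc : (q:ℤ) = y' := Int.toNat_of_nonneg hy'0
  rcases le_or_gt p q with hpq | hpq
  · -- n = p*(a+m) + (q-p)*m, count q ≤ N
    have h1' : ((p:ℤ)) * (a + m) ∈ nfold A p := smul_mem_nfold hamA p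
    have h2' : (((q - p : ℕ)):ℤ) * m ∈ nfold A (q - p) := smul_mem_nfold hmA (q - p)
    have h3' := mem_nfold_add h1' h2'
    have h4 : p + (q - p) = q := by omega
    rw [h4] at h3'
    have hcast : ((q - p : ℕ):ℤ) = (q:ℤ) - (p:ℤ) := by
      push_cast [Nat.cast_sub hpq]; ring
    have h5 : n = (p:ℤ) * (a + m) + ((q - p : ℕ):ℤ) * m := by
      rw [hcast, hpc, hqc, hrep']; ring
    rw [h5]
    refine nfold_subset A h0A ?_ h3'
    have : (q:ℤ) ≤ (N:ℤ) := by rw [hqc]; exact hy'N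
    exact_mod_cast this
  · -- n = q*(a+m) + (p-q)*a, count p ≤ N
    have h1' : ((q:ℤ)) * (a + m) ∈ nfold A q := smul_mem_nfold hamA q
    have h2' : (((p - q : ℕ)):ℤ) * a ∈ nfold A (p - q) := smul_mem_nfold haA (p - q)
    have h3' := mem_nfold_add h1' h2'
    have h4 : q + (p - q) = p := by omega
    rw [h4] at h3'
    have hcast : ((p - q : ℕ):ℤ) = (p:ℤ) - (q:ℤ) := by
      push_cast [Nat.cast_sub (le_of_lt hpq)]; ring
    have h5 : n = (q:ℤ) * (a + m) + ((p - q : ℕ):ℤ) * a := by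
      rw [hcast, hpc, hqc, hrep']; ring
    rw [h5]
    refine nfold_subset A h0A ?_ h3'
    have : (p:ℤ) ≤ (N:ℤ) := by rw [hpc]; linarith
    exact_mod_cast this

theorem stmt19 (a b m : ℤ) (hbm : b = 2 * m)
    (h1 : 0 < a) (h2 : a < m)
    (hgcd : Int.gcd a m = 1)
    (A : Finset ℤ) (hA : A = {0, a, m, a + m, b})
    (N : ℕ) (hN : m - 1 ≤ (N : ℤ)) :
    (↑(nfold A N) : Set ℤ) =
      Set.Icc 0 (b * N) \
        (postE A ∪ (fun x => b * N - x) '' postE (A.image (fun x => b - x))) := by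
  subst hbm
  have hm : 0 < m := h1.trans h2
  have hA2 : A = {0, a, m, a + m, 2*m} := hA
  set A' := A.image (fun x => 2*m - x) with hA'def
  have hA' : A' = {0, m - a, m, (m - a) + m, 2*m} := by
    rw [hA'def, hA2]
    simp only [Finset.image_insert, Finset.image_singleton]
    ext t
    simp only [Finset.mem_insert, Finset.mem_singleton]
    omega
  have hbound : ∀ e ∈ A, 0 ≤ e ∧ e ≤ 2*m := by
    intro e he; rw [hA2] at he
    simp only [Finset.mem_insert, Finset.mem_singleton] at he
    rcases he with rfl | rfl | rfl | rfl | rfl <;> omega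
  ext n
  simp only [Finset.coe_sort_coe, Set.mem_diff, Set.mem_Icc, Set.mem_union, Set.mem_image,
    Finset.mem_coe]
  constructor
  · intro hn
    obtain ⟨hn0, hn1⟩ := nfold_bound hbound N n hn
    refine ⟨⟨hn0, by linarith [hn1]⟩, ?_⟩
    rintro (⟨hn2, hnp⟩ | ⟨e, ⟨he1, hep⟩, heq⟩)
    · -- n ∈ postE A
      apply hnp
      have hN1 : 1 ≤ N := by
        rcases Nat.eq_zero_or_pos N with rfl | h
        · simp [nfold] at hn; omega
        · exact h
      exact ⟨N, hN1, hn⟩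
    · -- n = 2mN - e with e ∈ postE A'
      apply hep
      have hdual : e ∈ nfold A' N := by
        rw [hA'def, nfold_dual]
        exact Finset.mem_image.mpr ⟨n, hn, by linarith [heq]⟩
      have hN1 : 1 ≤ N := by
        rcases Nat.eq_zero_or_pos N with rfl | h
        · simp [nfold] at hdual; omega
        · exact h
      exact ⟨N, hN1, hdual⟩
  · rintro ⟨⟨hn0, hn1⟩, hnot⟩
    push_neg at hnot
    obtain ⟨hnE, hnI⟩ := hnot
    -- representation of n
    have hrepn : ∃ x y : ℤ, 0 ≤ x ∧ 0 ≤ y ∧ n = x * a + y * m := by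
      rcases eq_or_lt_of_le hn0 with rfl | hn0'
      · exact ⟨0, 0, le_refl _, le_refl _, by ring⟩
      · have : n ∈ postP A := by
          by_contra h
          exact hnE ⟨hn0', h⟩
        obtain ⟨N', _, hmem⟩ := this
        exact nfold_rep a m A hA2 N' n hmem
    -- representation of e = 2mN - n
    have hrepe : ∃ x y : ℤ, 0 ≤ x ∧ 0 ≤ y ∧ 2*m*(N:ℤ) - n = x * (m - a) + y * m := by
      rcases eq_or_lt_of_le (show 2*m*(N:ℤ) - n ≥ 0 by linarith) with heq | he0'
      · exact ⟨0, 0, le_refl _, le_refl _, by linarith⟩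
      · have : 2*m*(N:ℤ) - n ∈ postP A' := by
          by_contra h
          exact absurd (by ring) (hnI _ ⟨he0', h⟩)
        obtain ⟨N', _, hmem⟩ := this
        exact nfold_rep (m - a) m A' (by rw [hA']) N' _ hmem
    rcases le_or_gt n (m * N) with hcase | hcase
    · obtain ⟨x, y, hx, hy, hrep⟩ := hrepn
      exact main_half a m h1 h2 A hA2 N hN n hcase x y hx hy hrep
    · obtain ⟨x, y, hx, hy, hrep⟩ := hrepe
      have hmain : 2*m*(N:ℤ) - n ∈ nfold A' N :=
        main_half (m - a) m (by omega) (by omega) A' hA' N hN _ (by linarith) x y hx hy hrep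
      rw [hA'def, nfold_dual] at hmain
      obtain ⟨u, hu, huq⟩ := Finset.mem_image.mp hmain
      have : u = n := by linarith [huq]
      rwa [← this]
end
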